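/- Let A ∈ ℂ^{n×n} be Hermitian with eigenvalues λ_1 ≥ … ≥ λ_k > 0 ≥ λ_{k+1} ≥ … ≥ λ_n and D ∈ ℂ^{m×m} be Hermitian with eigenvalues μ_1 ≤ … ≤ μ_r ≤ 0 < μ_{r+1} ≤ … ≤ μ_m, with p = dim ker D. Let κ > 0 and assume r − p ≤ k and κ²λ_i + μ_i ≥ 0 for i = 1,…,r−p. For i = 1,…,r−p choose 0 < ε_i ≤ κ² with ε_iλ_i + μ_i ≥ 0, and set ε_j = 0 for j = r−p+1,…,r. Let U ∈ ℂ^{n×n}, V ∈ ℂ^{m×m} be unitary with A = U·diag(λ_1,…,λ_n)·U* and D = V·diag(μ_1,…,μ_m)·V*, let E ∈ ℂ^{n×m} have (i,i)-entry √ε_i for i = 1,…,r and all other entries zero, and set K := U E V*. Then ‖K‖ ≤ κ, and the characteristic polynomial of the block matrix S = [[A, −AK],[K*A, D]] ∈ ℂ^{(n+m)×(n+m)} is (up to sign) ∏_{i=r−p+1}^{n}(λ_i − η) · ∏_{j=r−p+1}^{m}(μ_j − η) · ∏_{i=1}^{r−p}(η² − (λ_i + μ_i)η + λ_i(μ_i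 + ε_iλ_i)); in particular the eigenvalues of S are λ_{r−p+1},…,λ_n, μ_{r−p+1},…,μ_m, and η_i^± = (λ_i + μ_i)/2 ± λ_i√(α_i − ε_i) for i = 1,…,r−p, where α_i := (λ_i − μ_i)²/(4λ_i²). -/

import Mathlib

open scoped Matrix ComplexOrder
open Polynomial

/-- The spectral (operator) norm of a complex rectangular matrix. -/
noncomputable def specNorm {n m : ℕ} (K : Matrix (Fin n) (Fin m) ℂ) : ℝ :=
  ‖LinearMap.toContinuousLinearMap (Matrix.toEuclideanLin K)‖

/-- The principal square root of a real number, as a complex number. -/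
noncomputable def sqrtC (x : ℝ) : ℂ :=
  if 0 ≤ x then (Real.sqrt x : ℂ) else Complex.I * (Real.sqrt (-x) : ℂ)

/-!
Conjugating by the unitary `diag(U, V)` turns `S` into the same block matrix built from `diag λ`,
`diag μ` and the rectangular diagonal `E`, whose only nonzero entries are `√ε i` for `i < r - p`.
For `x` different from every `λ i`, the Schur complement of `x - diag λ` is then diagonal, with
entries `x - μ j + ε j λ j² / (x - λ j)`, and multiplying the `j`-th of them by `x - λ j` for
`j < r - p` gives the quadratic factors. Two polynomials agreeing at all but finitely many points
are equal, which identifies the characteristic polynomial; its roots give the spectrum. The norm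
bound is `‖K‖ ≤ ‖E‖` and `‖E‖² = ‖Eᴴ E‖ = max ε i ≤ κ²`.
-/

open Matrix
open scoped Matrix.Norms.L2Operator

theorem specNorm_eq_l2_opNorm {n m : ℕ} (K : Matrix (Fin n) (Fin m) ℂ) : specNorm K = ‖K‖ := rfl

theorem Matrix.l2_opNorm_le_one_of_mem_unitaryGroup {ι 𝕜 : Type*} [RCLike 𝕜] [Fintype ι]
    [DecidableEq ι] {U : Matrix ι ι 𝕜} (hU : U ∈ unitaryGroup ι 𝕜) : ‖U‖ ≤ 1 := by
  have h : ‖U‖ * ‖U‖ ≤ 1 * 1 := by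
    rw [← l2_opNorm_conjTranspose_mul_self, ← star_eq_conjTranspose,
      Unitary.star_mul_self_of_mem hU, one_mul, ← diagonal_one, l2_opNorm_diagonal]
    exact pi_norm_le_iff_of_nonneg zero_le_one |>.mpr fun _ => by simp
  exact (mul_self_le_mul_self_iff (norm_nonneg _) zero_le_one).mpr h

theorem Matrix.l2_opNorm_mul_mul_conjTranspose_le {ι κ 𝕜 : Type*} [RCLike 𝕜] [Fintype ι]
    [DecidableEq ι] [Fintype κ] [DecidableEq κ] {U : Matrix ι ι 𝕜} {V : Matrix κ κ 𝕜}
    (hU : U ∈ unitaryGroup ι 𝕜) (hV : V ∈ unitaryGroup κ 𝕜) (K : Matrix ι κ 𝕜) :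
    ‖U * K * Vᴴ‖ ≤ ‖K‖ :=
  calc ‖U * K * Vᴴ‖ ≤ ‖U‖ * ‖K‖ * ‖Vᴴ‖ :=
        (l2_opNorm_mul _ _).trans (by gcongr; exact l2_opNorm_mul _ _)
    _ ≤ 1 * ‖K‖ * 1 := by
        rw [l2_opNorm_conjTranspose]
        gcongr
        exacts [l2_opNorm_le_one_of_mem_unitaryGroup hU, l2_opNorm_le_one_of_mem_unitaryGroup hV]
    _ = ‖K‖ := by ring

theorem Matrix.fromBlocks_mem_unitaryGroup {ι κ R : Type*} [Fintype ι] [DecidableEq ι] [Fintype κ]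
    [DecidableEq κ] [CommRing R] [StarRing R] {U : Matrix ι ι R} {V : Matrix κ κ R}
    (hU : U ∈ unitaryGroup ι R) (hV : V ∈ unitaryGroup κ R) :
    fromBlocks U 0 0 V ∈ unitaryGroup (ι ⊕ κ) R := by
  rw [mem_unitaryGroup_iff', star_eq_conjTranspose, fromBlocks_conjTranspose, fromBlocks_multiply]
  simp [← star_eq_conjTranspose, Unitary.star_mul_self_of_mem hU, Unitary.star_mul_self_of_mem hV]

theorem Matrix.charpoly_conj_of_mem_unitaryGroup {ι R : Type*} [Fintype ι] [DecidableEq ι]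
    [CommRing R] [StarRing R] {W : Matrix ι ι R} (hW : W ∈ unitaryGroup ι R) (M : Matrix ι ι R) :
    (W * M * Wᴴ).charpoly = M.charpoly := by
  rw [charpoly_mul_comm, ← Matrix.mul_assoc, ← star_eq_conjTranspose,
    Unitary.star_mul_self_of_mem hW, Matrix.one_mul]

theorem Matrix.det_fromBlocks_diagonal₁₁ {ι κ K : Type*} [Fintype ι] [DecidableEq ι] [Fintype κ]
    [DecidableEq κ] [Field K] (d : ι → K) (hd : ∀ i, d i ≠ 0) (B : Matrix ι κ K)
    (C : Matrix κ ι K) (D : Matrix κ κ K) :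
    (fromBlocks (diagonal d) B C D).det =
      (∏ i, d i) * (D - C * diagonal (fun i => (d i)⁻¹) * B).det := by
  let _ : Invertible (diagonal d) := ⟨diagonal fun i => (d i)⁻¹, by simp [hd], by simp [hd]⟩
  rw [det_fromBlocks₁₁, det_diagonal]
  rfl

def Matrix.fromBlocksCoupled {ι κ R : Type*} [Fintype ι] [Ring R] [StarRing R]
    (A : Matrix ι ι R) (K : Matrix ι κ R) (D : Matrix κ κ R) : Matrix (ι ⊕ κ) (ι ⊕ κ) R :=
  fromBlocks A (-(A * K)) (Kᴴ * A) D

theorem Matrix.fromBlocksCoupled_unitary_conj {ι κ R : Type*} [Fintype ι] [DecidableEq ι]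
    [Fintype κ] [CommRing R] [StarRing R] {U : Matrix ι ι R} (hU : U ∈ unitaryGroup ι R)
    (V : Matrix κ κ R) (A : Matrix ι ι R) (K : Matrix ι κ R) (D : Matrix κ κ R) :
    fromBlocksCoupled (U * A * Uᴴ) (U * K * Vᴴ) (V * D * Vᴴ) =
      fromBlocks U 0 0 V * fromBlocksCoupled A K D * (fromBlocks U 0 0 V)ᴴ := by
  have hUU : Uᴴ * U = 1 := by rw [← star_eq_conjTranspose, Unitary.star_mul_self_of_mem hU]
  simp only [fromBlocksCoupled, fromBlocks_conjTranspose, fromBlocks_multiply, conjTranspose_mul,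
    conjTranspose_conjTranspose, conjTranspose_zero, Matrix.mul_zero, Matrix.zero_mul, add_zero,
    zero_add, Matrix.mul_assoc, Matrix.mul_neg, Matrix.neg_mul, neg_zero]
  simp only [← Matrix.mul_assoc Uᴴ, hUU, Matrix.one_mul]

theorem Matrix.det_scalar_sub_fromBlocksCoupled_diagonal {ι κ K : Type*} [Fintype ι]
    [DecidableEq ι] [Fintype κ] [DecidableEq κ] [Field K] [StarRing K] (a : ι → K) (b : κ → K)
    (E : Matrix ι κ K) {x : K} (hx : ∀ i, x ≠ a i) :
    (scalar _ x - fromBlocksCoupled (diagonal a) E (diagonal b)).det =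
      (∏ i, (x - a i)) *
        (diagonal (fun j => x - b j) + Eᴴ * diagonal (fun i => a i ^ 2 / (x - a i)) * E).det := by
  have hsub : scalar _ x - fromBlocksCoupled (diagonal a) E (diagonal b) =
      fromBlocks (diagonal fun i => x - a i) (diagonal a * E) (-(Eᴴ * diagonal a))
        (diagonal fun j => x - b j) := by
    rw [fromBlocksCoupled, scalar_apply, ← Sum.elim_lam_const_lam_const x, ← fromBlocks_diagonal,
      sub_eq_add_neg, fromBlocks_neg, fromBlocks_add]
    congr 1 <;> simp [← sub_eq_add_neg]
  have hschur : -(Eᴴ * diagonal a) * diagonal (fun i => (x - a i)⁻¹) * (diagonal a * E) =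
      -(Eᴴ * diagonal (fun i => a i ^ 2 / (x - a i)) * E) := by
    simp only [Matrix.neg_mul, neg_inj, Matrix.mul_assoc]
    rw [← Matrix.mul_assoc (diagonal _) (diagonal _), diagonal_mul_diagonal,
      ← Matrix.mul_assoc (diagonal _) (diagonal _), diagonal_mul_diagonal]
    congr 3
    ext i
    ring
  rw [hsub, det_fromBlocks_diagonal₁₁ _ (fun i => sub_ne_zero.mpr (hx i)), hschur, sub_neg_eq_add]

theorem sqrtC_sq (t : ℝ) : sqrtC t ^ 2 = t := by
  unfold sqrtC
  split_ifs with h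
  · rw [← Complex.ofReal_pow, Real.sq_sqrt h]
  · rw [mul_pow, Complex.I_sq, ← Complex.ofReal_pow, Real.sq_sqrt (by linarith)]
    push_cast
    ring

theorem quadratic_eq_zero_iff_sqrtC {l μ e : ℝ} (hl : l ≠ 0) (x : ℂ) :
    x ^ 2 - ((l + μ : ℝ) : ℂ) * x + ((l * (μ + e * l) : ℝ) : ℂ) = 0 ↔
      x = (((l + μ) / 2 : ℝ) : ℂ) + l * sqrtC ((l - μ) ^ 2 / (4 * l ^ 2) - e) ∨
      x = (((l + μ) / 2 : ℝ) : ℂ) - l * sqrtC ((l - μ) ^ 2 / (4 * l ^ 2) - e) := by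
  have hl' : (l : ℂ) ≠ 0 := by exact_mod_cast hl
  -- the discriminant is `(l - μ)² - 4el² = 4l² ((l - μ)² / (4l²) - e)`
  have hdisc : ((l : ℂ) * sqrtC ((l - μ) ^ 2 / (4 * l ^ 2) - e)) ^ 2 =
      ((l : ℂ) - μ) ^ 2 / 4 - e * l ^ 2 := by
    rw [mul_pow, sqrtC_sq]
    push_cast
    field_simp
  rw [← sub_eq_zero (b := _ + _), ← sub_eq_zero (b := _ - _), ← mul_eq_zero]
  push_cast at hdisc ⊢
  constructor <;> intro h
  · linear_combination h - hdisc
  · linear_combination h + hdisc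

noncomputable def rectSqrtDiag (n m q : ℕ) (eps : ℕ → ℝ) : Matrix (Fin n) (Fin m) ℂ :=
  Matrix.of fun i j => if (i : ℕ) = j ∧ (j : ℕ) < q then (Real.sqrt (eps j) : ℂ) else 0

theorem rectSqrtDiag_eq_of_eps_eq_zero {n m q r : ℕ} {eps : ℕ → ℝ} (hqr : q ≤ r)
    (heps : ∀ j, q ≤ j → j < r → eps j = 0) :
    rectSqrtDiag n m r eps = rectSqrtDiag n m q eps := by
  ext i j
  simp only [rectSqrtDiag, of_apply]
  by_cases hj : (j : ℕ) < q
  · simp [hj, hj.trans_le hqr]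
  · by_cases hjr : (j : ℕ) < r <;> simp [hj, hjr, heps j (not_lt.mp hj)]

theorem rectSqrtDiag_conjTranspose_mul_diagonal_mul {n m q : ℕ} {eps : ℕ → ℝ} (hqn : q ≤ n)
    (heps : ∀ j < q, 0 ≤ eps j) (g : ℕ → ℂ) :
    (rectSqrtDiag n m q eps)ᴴ * diagonal (fun i : Fin n => g i) * rectSqrtDiag n m q eps =
      diagonal (fun j : Fin m => if (j : ℕ) < q then (eps j : ℂ) * g j else 0) := by
  ext j j'
  rw [mul_apply]
  simp only [mul_diagonal, conjTranspose_apply, rectSqrtDiag, of_apply, diagonal_apply]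
  by_cases hj : (j : ℕ) < q
  · rw [Finset.sum_eq_single ⟨j, hj.trans_le hqn⟩ (fun i _ hi => by simp [Fin.ext_iff.not.mp hi])
      (by simp)]
    by_cases hjj : j = j'
    · subst hjj
      simp only [hj, and_self, if_true, Complex.star_def, Complex.conj_ofReal]
      rw [mul_comm, ← mul_assoc, ← Complex.ofReal_mul, Real.mul_self_sqrt (heps j hj)]
    · simp [hjj, Fin.ext_iff.not.mp hjj]
  · simp [hj]

theorem rectSqrtDiag_l2_opNorm_le {n m q : ℕ} {eps : ℕ → ℝ} {κ : ℝ} (hqn : q ≤ n) (hκ : 0 ≤ κ)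
    (heps : ∀ j < q, 0 ≤ eps j) (hepsκ : ∀ j < q, eps j ≤ κ ^ 2) :
    ‖rectSqrtDiag n m q eps‖ ≤ κ := by
  refine (mul_self_le_mul_self_iff (norm_nonneg _) hκ).mpr ?_
  have h := rectSqrtDiag_conjTranspose_mul_diagonal_mul (m := m) hqn heps 1
  simp only [Pi.one_apply, diagonal_one, Matrix.mul_one, mul_one] at h
  rw [← l2_opNorm_conjTranspose_mul_self, h, l2_opNorm_diagonal]
  refine pi_norm_le_iff_of_nonneg (by positivity) |>.mpr fun j => ?_
  split_ifs with hj
  · rw [Complex.norm_real, Real.norm_of_nonneg (heps j hj), ← sq]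
    exact hepsκ j hj
  · simp [mul_self_nonneg]

noncomputable def coupledCharpoly (n m q : ℕ) (lam mu eps : ℕ → ℝ) : ℂ[X] :=
  (∏ i ∈ Finset.Ico q n, (X - C ((lam i : ℂ)))) *
  (∏ j ∈ Finset.Ico q m, (X - C ((mu j : ℂ)))) *
  (∏ i ∈ Finset.range q,
    (X ^ 2 - C (((lam i + mu i : ℝ) : ℂ)) * X + C (((lam i * (mu i + eps i * lam i) : ℝ) : ℂ))))

theorem eval_charpoly_fromBlocksCoupled_rectSqrtDiag {n m q : ℕ} {lam mu eps : ℕ → ℝ}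
    (hqn : q ≤ n) (heps : ∀ j < q, 0 ≤ eps j) {x : ℂ} (hx : ∀ i : Fin n, x ≠ lam i) :
    (fromBlocksCoupled (diagonal fun i : Fin n => (lam i : ℂ)) (rectSqrtDiag n m q eps)
        (diagonal fun j : Fin m => (mu j : ℂ))).charpoly.eval x =
      (∏ i : Fin n, (x - lam i)) *
        ∏ j : Fin m, (x - mu j + if (j : ℕ) < q then eps j * (lam j ^ 2 / (x - lam j)) else 0) := by
  rw [eval_charpoly, det_scalar_sub_fromBlocksCoupled_diagonal _ _ _ hx,
    rectSqrtDiag_conjTranspose_mul_diagonal_mul hqn heps (fun a => (lam a : ℂ) ^ 2 / (x - lam a)),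
    diagonal_add, det_diagonal]

theorem prod_mul_prod_eq_eval_coupledCharpoly {n m q : ℕ} {lam mu eps : ℕ → ℝ} (hqn : q ≤ n)
    (hqm : q ≤ m) {x : ℂ} (hx : ∀ i < q, x ≠ lam i) :
    (∏ i : Fin n, (x - lam i)) *
        ∏ j : Fin m, (x - mu j + if (j : ℕ) < q then eps j * (lam j ^ 2 / (x - lam j)) else 0) =
      (coupledCharpoly n m q lam mu eps).eval x := by
  rw [Fin.prod_univ_eq_prod_range (fun i => x - lam i),
    Fin.prod_univ_eq_prod_range
      (fun j => x - mu j + if j < q then (eps j : ℂ) * (lam j ^ 2 / (x - lam j)) else 0),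
    ← Finset.prod_range_mul_prod_Ico _ hqn, ← Finset.prod_range_mul_prod_Ico _ hqm]
  have hIco : ∏ j ∈ Finset.Ico q m,
      (x - mu j + if j < q then (eps j : ℂ) * (lam j ^ 2 / (x - lam j)) else 0) =
        ∏ j ∈ Finset.Ico q m, (x - mu j) :=
    Finset.prod_congr rfl fun j hj => by simp [(Finset.mem_Ico.mp hj).1]
  have hpair : ∏ i ∈ Finset.range q, (x - lam i) *
      (x - mu i + if i < q then (eps i : ℂ) * (lam i ^ 2 / (x - lam i)) else 0) =
        ∏ i ∈ Finset.range q, (x ^ 2 - ((lam i + mu i : ℝ) : ℂ) * x +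
          ((lam i * (mu i + eps i * lam i) : ℝ) : ℂ)) := by
    refine Finset.prod_congr rfl fun i hi => ?_
    have hi := Finset.mem_range.mp hi
    have hx0 : x - lam i ≠ 0 := sub_ne_zero.mpr (hx i hi)
    rw [if_pos hi]
    push_cast
    field_simp
    ring
  simp only [coupledCharpoly, eval_mul, eval_prod, eval_sub, eval_add, eval_pow, eval_X, eval_C]
  rw [hIco, ← hpair, Finset.prod_mul_distrib]
  ring

theorem charpoly_fromBlocksCoupled_rectSqrtDiag {n m q : ℕ} {lam mu eps : ℕ → ℝ} (hqn : q ≤ n)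
    (hqm : q ≤ m) (heps : ∀ j < q, 0 ≤ eps j) :
    (fromBlocksCoupled (diagonal fun i : Fin n => (lam i : ℂ)) (rectSqrtDiag n m q eps)
        (diagonal fun j : Fin m => (mu j : ℂ))).charpoly = coupledCharpoly n m q lam mu eps := by
  refine Polynomial.eq_of_infinite_eval_eq _ _
    ((Set.finite_range fun i : Fin n => (lam i : ℂ)).infinite_compl.mono fun x hx => ?_)
  have hx' : ∀ i : Fin n, x ≠ lam i := fun i h => hx ⟨i, h.symm⟩
  rw [Set.mem_ofPred_eq, eval_charpoly_fromBlocksCoupled_rectSqrtDiag hqn heps hx',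
    prod_mul_prod_eq_eval_coupledCharpoly hqn hqm fun i hi => hx' ⟨i, hi.trans_le hqn⟩]

theorem isRoot_coupledCharpoly_iff {n m q : ℕ} {lam mu eps : ℕ → ℝ} (hlam : ∀ i < q, lam i ≠ 0)
    (x : ℂ) :
    (coupledCharpoly n m q lam mu eps).IsRoot x ↔
      x ∈ ((fun i : ℕ => ((lam i : ℂ))) '' (Set.Ico q n)) ∪
        ((fun j : ℕ => ((mu j : ℂ))) '' (Set.Ico q m)) ∪
        {η : ℂ | ∃ i : ℕ, i < q ∧
          (η = (((lam i + mu i) / 2 : ℝ) : ℂ)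
                + (lam i : ℂ) * sqrtC ((lam i - mu i) ^ 2 / (4 * lam i ^ 2) - eps i) ∨
           η = (((lam i + mu i) / 2 : ℝ) : ℂ)
                - (lam i : ℂ) * sqrtC ((lam i - mu i) ^ 2 / (4 * lam i ^ 2) - eps i))} := by
  simp only [coupledCharpoly, IsRoot, eval_mul, eval_prod, eval_sub, eval_add, eval_pow, eval_X,
    eval_C, mul_eq_zero, Finset.prod_eq_zero_iff, Finset.mem_Ico, Finset.mem_range, sub_eq_zero,
    Set.mem_union, Set.mem_image, Set.mem_Ico, Set.mem_ofPred_eq, eq_comm (b := x)]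
  exact or_congr Iff.rfl <| exists_congr fun i => and_congr_right fun hi =>
    quadratic_eq_zero_iff_sqrtC (hlam i hi) x

theorem spectrum_blockMatrix_semidef_general
    (n m k r p : ℕ) (hkn : k ≤ n) (hrm : r ≤ m)
    (κ : ℝ) (hκ : 0 < κ)
    (lam mu eps : ℕ → ℝ)
    (hlampos : ∀ i : ℕ, i < k → 0 < lam i)
    (D : Matrix (Fin m) (Fin m) ℂ)
    (hrpk : r - p ≤ k)
    (heps0 : ∀ i : ℕ, i < r - p → 0 < eps i)
    (hepsκ : ∀ i : ℕ, i < r - p → eps i ≤ κ ^ 2)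
    (hepsz : ∀ j : ℕ, r - p ≤ j → j < r → eps j = 0)
    (U : Matrix (Fin n) (Fin n) ℂ) (hU : U ∈ Matrix.unitaryGroup (Fin n) ℂ)
    (V : Matrix (Fin m) (Fin m) ℂ) (hV : V ∈ Matrix.unitaryGroup (Fin m) ℂ)
    (A : Matrix (Fin n) (Fin n) ℂ)
    (hA : A = U * Matrix.diagonal (fun i : Fin n => (lam i : ℂ)) * Uᴴ)
    (hD : D = V * Matrix.diagonal (fun j : Fin m => (mu j : ℂ)) * Vᴴ)
    (E : Matrix (Fin n) (Fin m) ℂ)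
    (hE : ∀ (i : Fin n) (j : Fin m),
      E i j = if (i : ℕ) = (j : ℕ) ∧ (j : ℕ) < r then (Real.sqrt (eps j) : ℂ) else 0)
    (K : Matrix (Fin n) (Fin m) ℂ) (hK : K = U * E * Vᴴ)
    (S : Matrix (Fin n ⊕ Fin m) (Fin n ⊕ Fin m) ℂ)
    (hS : S = Matrix.fromBlocks A (-(A * K)) (Kᴴ * A) D) :
    specNorm K ≤ κ ∧
    S.charpoly =
      (∏ i ∈ Finset.Ico (r - p) n, (X - C ((lam i : ℂ)))) *
      (∏ j ∈ Finset.Ico (r - p) m, (X - C ((mu j : ℂ)))) *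
      (∏ i ∈ Finset.range (r - p),
        (X ^ 2 - C (((lam i + mu i : ℝ) : ℂ)) * X
          + C (((lam i * (mu i + eps i * lam i) : ℝ) : ℂ)))) ∧
    spectrum ℂ S =
      ((fun i : ℕ => ((lam i : ℂ))) '' (Set.Ico (r - p) n)) ∪
      ((fun j : ℕ => ((mu j : ℂ))) '' (Set.Ico (r - p) m)) ∪
      {η : ℂ | ∃ i : ℕ, i < r - p ∧
        (η = (((lam i + mu i) / 2 : ℝ) : ℂ)
              + (lam i : ℂ) * sqrtC ((lam i - mu i) ^ 2 / (4 * lam i ^ 2) - eps i) ∨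
         η = (((lam i + mu i) / 2 : ℝ) : ℂ)
              - (lam i : ℂ) * sqrtC ((lam i - mu i) ^ 2 / (4 * lam i ^ 2) - eps i))} := by
  have hqn : r - p ≤ n := hrpk.trans hkn
  have hqm : r - p ≤ m := (Nat.sub_le r p).trans hrm
  have heps : ∀ j < r - p, 0 ≤ eps j := fun j hj => (heps0 j hj).le
  have hE' : E = rectSqrtDiag n m (r - p) eps :=
    (Matrix.ext hE).trans (rectSqrtDiag_eq_of_eps_eq_zero (Nat.sub_le r p) hepsz)
  have hcp : S.charpoly = coupledCharpoly n m (r - p) lam mu eps := by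
    rw [hS, ← fromBlocksCoupled, hA, hD, hK, hE', fromBlocksCoupled_unitary_conj hU,
      charpoly_conj_of_mem_unitaryGroup (fromBlocks_mem_unitaryGroup hU hV),
      charpoly_fromBlocksCoupled_rectSqrtDiag hqn hqm heps]
  refine ⟨?_, hcp, Set.ext fun x => ?_⟩
  · rw [specNorm_eq_l2_opNorm, hK, hE']
    exact (l2_opNorm_mul_mul_conjTranspose_le hU hV _).trans
      (rectSqrtDiag_l2_opNorm_le hqn hκ.le heps hepsκ)
  · rw [mem_spectrum_iff_isRoot_charpoly, hcp]
    exact isRoot_coupledCharpoly_iff (fun i hi => (hlampos i (hi.trans_le hrpk)).ne') x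

/-- Spectrum of the block matrix `S = [[A, −AK],[KᴴA, D]]` for the particular contraction
`K = U E Vᴴ` built from the eigenvalue data of `A` and `D` and parameters `ε i` (positive
semidefinite case): `‖K‖ ≤ κ`, the characteristic polynomial of `S` is the (monic version
of the) product `∏_{i≥r−p}(X − lam i) ∏_{j≥r−p}(X − mu j) ∏_{i<r−p}(X² − (lam i + mu i)X +
lam i(mu i + ε i·lam i))`, and the eigenvalues of `S` are `lam i` (`r−p ≤ i < n`),
`mu j` (`r−p ≤ j < m`) and `η_i^± = (lam i + mu i)/2 ± lam i·√(α i − ε i)` (`i < r−p`),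
where `α i = (lam i − mu i)²/(4(lam i)²)`. -/
theorem spectrum_blockMatrix_semidef
    (n m k r p : ℕ) (hkn : k ≤ n) (hrm : r ≤ m) (hpr : p ≤ r)
    (κ : ℝ) (hκ : 0 < κ)
    (lam mu eps : ℕ → ℝ)
    (hlam : ∀ i j : ℕ, i ≤ j → j < n → lam j ≤ lam i)
    (hlampos : ∀ i : ℕ, i < k → 0 < lam i)
    (hlamnonpos : ∀ i : ℕ, k ≤ i → i < n → lam i ≤ 0)
    (hmu : ∀ i j : ℕ, i ≤ j → j < m → mu i ≤ mu j)
    (hmunonpos : ∀ i : ℕ, i < r → mu i ≤ 0)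
    (hmupos : ∀ i : ℕ, r ≤ i → i < m → 0 < mu i)
    (D : Matrix (Fin m) (Fin m) ℂ)
    (hp : p = Module.finrank ℂ (LinearMap.ker D.mulVecLin))
    (hrpk : r - p ≤ k)
    (hcond : ∀ i : ℕ, i < r - p → 0 ≤ κ ^ 2 * lam i + mu i)
    (heps0 : ∀ i : ℕ, i < r - p → 0 < eps i)
    (hepsκ : ∀ i : ℕ, i < r - p → eps i ≤ κ ^ 2)
    (hepsc : ∀ i : ℕ, i < r - p → 0 ≤ eps i * lam i + mu i)
    (hepsz : ∀ j : ℕ, r - p ≤ j → j < r → eps j = 0)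
    (U : Matrix (Fin n) (Fin n) ℂ) (hU : U ∈ Matrix.unitaryGroup (Fin n) ℂ)
    (V : Matrix (Fin m) (Fin m) ℂ) (hV : V ∈ Matrix.unitaryGroup (Fin m) ℂ)
    (A : Matrix (Fin n) (Fin n) ℂ)
    (hA : A = U * Matrix.diagonal (fun i : Fin n => (lam i : ℂ)) * Uᴴ)
    (hD : D = V * Matrix.diagonal (fun j : Fin m => (mu j : ℂ)) * Vᴴ)
    (E : Matrix (Fin n) (Fin m) ℂ)
    (hE : ∀ (i : Fin n) (j : Fin m),
      E i j = if (i : ℕ) = (j : ℕ) ∧ (j : ℕ) < r then (Real.sqrt (eps j) : ℂ) else 0)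
    (K : Matrix (Fin n) (Fin m) ℂ) (hK : K = U * E * Vᴴ)
    (S : Matrix (Fin n ⊕ Fin m) (Fin n ⊕ Fin m) ℂ)
    (hS : S = Matrix.fromBlocks A (-(A * K)) (Kᴴ * A) D) :
    specNorm K ≤ κ ∧
    S.charpoly =
      (∏ i ∈ Finset.Ico (r - p) n, (X - C ((lam i : ℂ)))) *
      (∏ j ∈ Finset.Ico (r - p) m, (X - C ((mu j : ℂ)))) *
      (∏ i ∈ Finset.range (r - p),
        (X ^ 2 - C (((lam i + mu i : ℝ) : ℂ)) * X
          + C (((lam i * (mu i + eps i * lam i) : ℝ) : ℂ)))) ∧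
    spectrum ℂ S =
      ((fun i : ℕ => ((lam i : ℂ))) '' (Set.Ico (r - p) n)) ∪
      ((fun j : ℕ => ((mu j : ℂ))) '' (Set.Ico (r - p) m)) ∪
      {η : ℂ | ∃ i : ℕ, i < r - p ∧
        (η = (((lam i + mu i) / 2 : ℝ) : ℂ)
              + (lam i : ℂ) * sqrtC ((lam i - mu i) ^ 2 / (4 * lam i ^ 2) - eps i) ∨
         η = (((lam i + mu i) / 2 : ℝ) : ℂ)
              - (lam i : ℂ) * sqrtC ((lam i - mu i) ^ 2 / (4 * lam i ^ 2) - eps i))} :=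
  spectrum_blockMatrix_semidef_general n m k r p hkn hrm κ hκ lam mu eps hlampos D hrpk heps0 hepsκ
    hepsz U hU V hV A hA hD E hE K hK S hS
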